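/- arXiv:2304.02068 — 2 statements merged into one kernel-verified Lean document; each statement's English description precedes it below -/
import Mathlib

section
/- Let g(x; φ, X) denote the equilibrium payoff of the adversary on one front when it allocates x ≥ 0 against a player with budget X > 0 defending total battlefield value φ > 0, namely g(x; φ, X) = φ·x/(2X) if x < X and g(x; φ, X) = φ·(1 − X/(2x)) if x ≥ X. Suppose φ1, φ2, X1, X2 are positive reals with φ1·X2 ≥ φ2·X1 and 1 − √(φ1·X1·X2/φ2) > X2. Then the point x* = √(φ1·X1)/(√(φ1·X1) + √(φ2·X2)) lies in [0,1] and maximizes the adversary's total payoff f(x) = g(x; φ1, X1) + g(1 − x; φ2, X2) over all x ∈ [0,1]; that is, f(x) ≤ f(x*) for every x ∈ [0,1]. -/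
/-!
Each front's payoff is concave in the allocation, with derivative `φ X / (2 y²)` for `y > X`.
Write `s_i = √(φ_i X_i)`. Both hypotheses together say `(s1 + s2) √(X_i / φ_i) < 1`, i.e. that
`x* = s1 / (s1 + s2)` and `1 - x* = s2 / (s1 + s2)` exceed `X1` and `X2`; there both slopes equal
`(s1 + s2)² / 2`, so the sum of the two tangent lines is constant and dominates the total payoff.
-/

/-- Equilibrium payoff of the adversary on one front when it allocates `x`
against a player with budget `X` defending total battlefield value `φ`. -/
noncomputable def advPayoff (x φ X : ℝ) : ℝ :=
  if x < X then φ * x / (2 * X) else φ * (1 - X / (2 * x))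

open Real

lemma advPayoff_of_le {x φ X : ℝ} (h : X ≤ x) : advPayoff x φ X = φ * (1 - X / (2 * x)) :=
  if_neg (not_lt.2 h)

lemma advPayoff_le_tangent {φ X y y0 : ℝ} (hφ : 0 ≤ φ) (hX : 0 < X) (hy0 : X < y0) :
    advPayoff y φ X ≤ advPayoff y0 φ X + φ * X / (2 * y0 ^ 2) * (y - y0) := by
  have hy0pos : 0 < y0 := hX.trans hy0
  rw [advPayoff_of_le hy0.le]
  unfold advPayoff
  split_ifs with hy
  · have gap : φ * (1 - X / (2 * y0)) + φ * X / (2 * y0 ^ 2) * (y - y0) - φ * y / (2 * X)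
        = φ * ((y0 - X) * (2 * X * y0 - y * (y0 + X))) / (2 * X * y0 ^ 2) := by
      field_simp
      ring
    have : 0 ≤ φ * ((y0 - X) * (2 * X * y0 - y * (y0 + X))) / (2 * X * y0 ^ 2) := by
      have : 0 ≤ 2 * X * y0 - y * (y0 + X) := by nlinarith
      have : 0 ≤ y0 - X := by linarith
      positivity
    linarith
  · have hypos : 0 < y := hX.trans_le (not_lt.1 hy)
    have gap : φ * (1 - X / (2 * y0)) + φ * X / (2 * y0 ^ 2) * (y - y0) - φ * (1 - X / (2 * y))
        = φ * X * (y - y0) ^ 2 / (2 * y * y0 ^ 2) := by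
      field_simp
      ring
    have : 0 ≤ φ * X * (y - y0) ^ 2 / (2 * y * y0 ^ 2) := by positivity
    linarith

theorem advPayoff_add_le_of_slope_eq {φ1 φ2 X1 X2 y1 y2 B : ℝ} (hφ1 : 0 ≤ φ1) (hφ2 : 0 ≤ φ2)
    (hX1 : 0 < X1) (hX2 : 0 < X2) (hy1 : X1 < y1) (hy2 : X2 < y2) (hsum : y1 + y2 = B)
    (hslope : φ1 * X1 / (2 * y1 ^ 2) = φ2 * X2 / (2 * y2 ^ 2)) (x : ℝ) :
    advPayoff x φ1 X1 + advPayoff (B - x) φ2 X2 ≤ advPayoff y1 φ1 X1 + advPayoff y2 φ2 X2 := by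
  have h1 := advPayoff_le_tangent (y := x) hφ1 hX1 hy1
  have h2 := advPayoff_le_tangent (y := B - x) hφ2 hX2 hy2
  rw [← hslope, show B - x - y2 = -(x - y1) by linarith] at h2
  linarith

lemma div_two_mul_sqrt_div_sq {c : ℝ} (hc : 0 < c) (a : ℝ) :
    c / (2 * (√c / a) ^ 2) = a ^ 2 / 2 := by
  rcases eq_or_ne a 0 with rfl | ha
  · simp
  · rw [div_pow, sq_sqrt hc.le]
    field_simp

lemma sqrt_mul_mul_sqrt_div {φ X : ℝ} (hφ : 0 < φ) (hX : 0 ≤ X) :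
    √(φ * X) * √(X / φ) = X := by
  rw [← sqrt_mul (by positivity), show φ * X * (X / φ) = X ^ 2 by field_simp, sqrt_sq hX]

lemma lt_sqrt_mul_div_of_sqrt_div_mul_lt_one {φ X a : ℝ} (hφ : 0 < φ) (hX : 0 < X) (ha : 0 < a)
    (h : √(X / φ) * a < 1) : X < √(φ * X) / a := by
  have hs : 0 < √(φ * X) := sqrt_pos.2 (by positivity)
  rw [lt_div_iff₀ ha]
  calc X * a = √(φ * X) * (√(X / φ) * a) := by rw [← mul_assoc, sqrt_mul_mul_sqrt_div hφ hX.le]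
    _ < √(φ * X) * 1 := by gcongr
    _ = √(φ * X) := mul_one _

theorem case3_adversary_opt (φ1 φ2 X1 X2 : ℝ)
    (hφ1 : 0 < φ1) (hφ2 : 0 < φ2) (hX1 : 0 < X1) (hX2 : 0 < X2)
    (hratio : φ1 * X2 ≥ φ2 * X1)
    (hcase : 1 - Real.sqrt (φ1 * X1 * X2 / φ2) > X2) :
    Real.sqrt (φ1 * X1) / (Real.sqrt (φ1 * X1) + Real.sqrt (φ2 * X2)) ∈ Set.Icc (0 : ℝ) 1 ∧
    ∀ x ∈ Set.Icc (0 : ℝ) 1,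
      advPayoff x φ1 X1 + advPayoff (1 - x) φ2 X2 ≤
      advPayoff (Real.sqrt (φ1 * X1) / (Real.sqrt (φ1 * X1) + Real.sqrt (φ2 * X2))) φ1 X1 +
        advPayoff (1 - Real.sqrt (φ1 * X1) / (Real.sqrt (φ1 * X1) + Real.sqrt (φ2 * X2))) φ2 X2 := by
  set s1 := √(φ1 * X1)
  set s2 := √(φ2 * X2)
  have hs1 : 0 < s1 := sqrt_pos.2 (by positivity)
  have hs2 : 0 < s2 := sqrt_pos.2 (by positivity)
  have hcompl : 1 - s1 / (s1 + s2) = s2 / (s1 + s2) := by field_simp; ring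
  have hr2 : √(X2 / φ2) * (s1 + s2) < 1 := by
    rw [mul_div_assoc, sqrt_mul (by positivity)] at hcase
    linarith [sqrt_mul_mul_sqrt_div hφ2 hX2.le]
  have hr12 : √(X1 / φ1) ≤ √(X2 / φ2) :=
    sqrt_le_sqrt ((div_le_div_iff₀ hφ1 hφ2).2 (by linarith))
  have hy1 := lt_sqrt_mul_div_of_sqrt_div_mul_lt_one hφ1 hX1 (by positivity)
    ((mul_le_mul_of_nonneg_right hr12 (by positivity)).trans_lt hr2)
  have hy2 := lt_sqrt_mul_div_of_sqrt_div_mul_lt_one hφ2 hX2 (by positivity) hr2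
  refine ⟨⟨by positivity, (div_le_one (by positivity)).2 (by linarith)⟩, fun x _ => ?_⟩
  rw [hcompl]
  refine advPayoff_add_le_of_slope_eq hφ1.le hφ2.le hX1 hX2 hy1 hy2 ?_ ?_ x
  · rw [← hcompl]; ring
  · rw [div_two_mul_sqrt_div_sq (by positivity), div_two_mul_sqrt_div_sq (by positivity)]
end

section
/- Let φ1, φ2, X1, X2 be positive reals with φ1·X2 > φ2·X1 and 1 − √(φ1·X1·X2/φ2) > X2 (interior of Case 3a). Define, for (b, v) near (0, 0), π1(b, v) = ((φ1 − v)/2)·(X1 + b) + (1/2)·√((X1 + b)·(X2 − b)·(φ1 − v)·(φ2 + v)) and π2(b, v) = ((φ2 + v)/2)·(X2 − b) + (1/2)·√((X1 + b)·(X2 − b)·(φ1 − v)·(φ2 + v)). Assume it is not the case that both φ1 = 3·φ2 and (φ1 − φ2)²·X2 = 4·φ1·φ2·X1. Then for every ε > 0 there exists a pair (b, v) with |b| < ε and |v| < ε such that π1(b, v) > π1(0, 0) and π2(b, v) > π2(0, 0). (Proposition 21: existence of mutually beneficial joint transfers in the interior of Case 3.) -/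
/-!
Move along the ray `(b, v) = t • (X1 + X2, φ1 + φ2)`. Along it the first-order gain of the
linear part of either payoff is `(φ1 * X2 - φ2 * X1) / 2 > 0`, and the product under the square
root grows at rate `(φ1 * X2 - φ2 * X1) * (φ1 * X1 + φ2 * X2) > 0`. So both payoffs have the
same positive derivative in `t` at `0`, and both strictly increase for all small `t > 0`.
-/

open Filter Topology

theorem HasDerivAt.eventually_lt_of_pos {f : ℝ → ℝ} {f' x : ℝ} (hf : HasDerivAt f f' x)
    (hf' : 0 < f') : ∀ᶠ t in 𝓝[>] x, f x < f t := by
  have hslope : Tendsto (slope f x) (𝓝[>] x) (𝓝 f') :=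
    (hasDerivWithinAt_iff_tendsto_slope' (lt_irrefl x)).mp hf.hasDerivWithinAt
  filter_upwards [hslope.eventually (lt_mem_nhds hf'), self_mem_nhdsWithin] with t hpos hxt
  exact (slope_pos_iff hxt).mp hpos

theorem eventually_abs_mul_lt (β : ℝ) {ε : ℝ} (hε : 0 < ε) :
    ∀ᶠ t in 𝓝 (0 : ℝ), |t * β| < ε :=
  ((continuous_id.mul continuous_const).abs.tendsto' 0 0 (by simp)).eventually_lt_const hε

section Transfer

variable (φ1 φ2 X1 X2 β ν : ℝ)

noncomputable def sqrtProductRate : ℝ :=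
  (β * (X2 - X1) * (φ1 * φ2) + ν * (X1 * X2) * (φ1 - φ2)) / (2 * √(X1 * X2 * φ1 * φ2))

theorem hasDerivAt_sqrt_transferProduct (h : X1 * X2 * φ1 * φ2 ≠ 0) :
    HasDerivAt (fun t => √((X1 + t * β) * (X2 - t * β) * (φ1 - t * ν) * (φ2 + t * ν)))
      (sqrtProductRate φ1 φ2 X1 X2 β ν) 0 := by
  have hprod : HasDerivAt (fun t => (X1 + t * β) * (X2 - t * β) * (φ1 - t * ν) * (φ2 + t * ν))
      (β * (X2 - X1) * (φ1 * φ2) + ν * (X1 * X2) * (φ1 - φ2)) 0 := by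
    refine ((((hasDerivAt_mul_const β).const_add X1).fun_mul
      ((hasDerivAt_mul_const β).const_sub X2)).fun_mul
      ((hasDerivAt_mul_const ν).const_sub φ1)).fun_mul
      ((hasDerivAt_mul_const ν).const_add φ2) |>.congr_deriv ?_
    ring
  rw [sqrtProductRate]
  convert hprod.sqrt (by simpa using h) using 3
  simp

variable {φ1 φ2 X1 X2}

theorem sqrtProductRate_pos (hφ1 : 0 < φ1) (hφ2 : 0 < φ2) (hX1 : 0 < X1) (hX2 : 0 < X2)
    (hratio : φ2 * X1 < φ1 * X2) : 0 < sqrtProductRate φ1 φ2 X1 X2 (X1 + X2) (φ1 + φ2) := by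
  have hnum : (X1 + X2) * (X2 - X1) * (φ1 * φ2) + (φ1 + φ2) * (X1 * X2) * (φ1 - φ2) =
      (φ1 * X2 - φ2 * X1) * (φ1 * X1 + φ2 * X2) := by ring
  rw [sqrtProductRate, hnum]
  have := sub_pos.mpr hratio
  positivity

end Transfer

theorem case3_joint_transfer_general (φ1 φ2 X1 X2 : ℝ)
    (hφ1 : 0 < φ1) (hφ2 : 0 < φ2) (hX1 : 0 < X1) (hX2 : 0 < X2)
    (hratio : φ1 * X2 > φ2 * X1)
    (π1 π2 : ℝ → ℝ → ℝ)
    (hπ1 : ∀ b v, π1 b v = ((φ1 - v) / 2) * (X1 + b) +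
      (1 / 2) * Real.sqrt ((X1 + b) * (X2 - b) * (φ1 - v) * (φ2 + v)))
    (hπ2 : ∀ b v, π2 b v = ((φ2 + v) / 2) * (X2 - b) +
      (1 / 2) * Real.sqrt ((X1 + b) * (X2 - b) * (φ1 - v) * (φ2 + v))) :
    ∀ ε > (0 : ℝ), ∃ b v : ℝ,
      |b| < ε ∧ |v| < ε ∧
      π1 b v > π1 0 0 ∧ π2 b v > π2 0 0 := by
  intro ε hε
  have hsqrt := hasDerivAt_sqrt_transferProduct φ1 φ2 X1 X2 (X1 + X2) (φ1 + φ2) (by positivity)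
  set c := (φ1 * X2 - φ2 * X1) / 2 +
    sqrtProductRate φ1 φ2 X1 X2 (X1 + X2) (φ1 + φ2) / 2 with hc
  have hc_pos : 0 < c := by
    have := sqrtProductRate_pos hφ1 hφ2 hX1 hX2 hratio
    linarith
  have h1 : HasDerivAt (fun t => π1 (t * (X1 + X2)) (t * (φ1 + φ2))) c 0 := by
    simp only [hπ1]
    refine ((((hasDerivAt_mul_const _).const_sub φ1).div_const 2).fun_mul
      ((hasDerivAt_mul_const _).const_add X1)).add (hsqrt.const_mul _) |>.congr_deriv ?_
    rw [hc]; ring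
  have h2 : HasDerivAt (fun t => π2 (t * (X1 + X2)) (t * (φ1 + φ2))) c 0 := by
    simp only [hπ2]
    refine ((((hasDerivAt_mul_const _).const_add φ2).div_const 2).fun_mul
      ((hasDerivAt_mul_const _).const_sub X2)).add (hsqrt.const_mul _) |>.congr_deriv ?_
    rw [hc]; ring
  have hsmall := (eventually_abs_mul_lt (X1 + X2) hε).and (eventually_abs_mul_lt (φ1 + φ2) hε)
  obtain ⟨t, ⟨hb, hv⟩, h1t, h2t⟩ := (hsmall.filter_mono nhdsWithin_le_nhds |>.and <|
    (h1.eventually_lt_of_pos hc_pos).and (h2.eventually_lt_of_pos hc_pos)).exists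
  exact ⟨_, _, hb, hv, by simpa using h1t, by simpa using h2t⟩

theorem case3_joint_transfer (φ1 φ2 X1 X2 : ℝ)
    (hφ1 : 0 < φ1) (hφ2 : 0 < φ2) (hX1 : 0 < X1) (hX2 : 0 < X2)
    (hratio : φ1 * X2 > φ2 * X1)
    (hcase : 1 - Real.sqrt (φ1 * X1 * X2 / φ2) > X2)
    (π1 π2 : ℝ → ℝ → ℝ)
    (hπ1 : ∀ b v, π1 b v = ((φ1 - v) / 2) * (X1 + b) +
      (1 / 2) * Real.sqrt ((X1 + b) * (X2 - b) * (φ1 - v) * (φ2 + v)))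
    (hπ2 : ∀ b v, π2 b v = ((φ2 + v) / 2) * (X2 - b) +
      (1 / 2) * Real.sqrt ((X1 + b) * (X2 - b) * (φ1 - v) * (φ2 + v)))
    (hnd : ¬ (φ1 = 3 * φ2 ∧ (φ1 - φ2) ^ 2 * X2 = 4 * φ1 * φ2 * X1)) :
    ∀ ε > (0 : ℝ), ∃ b v : ℝ,
      |b| < ε ∧ |v| < ε ∧
      π1 b v > π1 0 0 ∧ π2 b v > π2 0 0 :=
  case3_joint_transfer_general φ1 φ2 X1 X2 hφ1 hφ2 hX1 hX2 hratio π1 π2 hπ1 hπ2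
end
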